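/- Let d, D be positive integers and A ∈ ℝ^{d×D} with columns a_1, …, a_D. For a subset I ⊆ {1,…,D}, let λ(I) = inf { Σ_{i∈I} ⟨u, a_i⟩² : u ∈ ℝ^d, ‖u‖ = 1 } (the square of the d-th singular value of the submatrix A[I]), and set A_0² = min over all subsets I ⊆ {1,…,D} of (λ(I) + λ(I^c)). Then for all x, y ∈ ℝ^d, ‖α_A(x) − α_A(y)‖² ≥ A_0² · min(‖x − y‖, ‖x + y‖)². -/
import Mathlib


open scoped BigOperators

namespace PR

noncomputable section

/-- Euclidean inner product on `ℝ^d`. -/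
def dot {d : ℕ} (x y : Fin d → ℝ) : ℝ := ∑ i, x i * y i

/-- The `k`-th column of `A`. -/
def col {d D : ℕ} (A : Matrix (Fin d) (Fin D) ℝ) (k : Fin D) : Fin d → ℝ := fun i => A i k

/-- Analysis operator `T_A(x)_k = ⟨x, a_k⟩`. -/
def TA {d D : ℕ} (A : Matrix (Fin d) (Fin D) ℝ) (x : Fin d → ℝ) : Fin D → ℝ :=
  fun k => dot x (col A k)

/-- Phase-retrieval map `α_A(x)_k = |⟨x, a_k⟩|`. -/
def alpha {d D : ℕ} (A : Matrix (Fin d) (Fin D) ℝ) (x : Fin d → ℝ) : Fin D → ℝ :=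
  fun k => |dot x (col A k)|

/-- Sorting encoder `β_A(X)`: its `k`-th column is the decreasingly sorted pair
`(max(⟨x₁,a_k⟩,⟨x₂,a_k⟩), min(⟨x₁,a_k⟩,⟨x₂,a_k⟩))`. -/
def beta {d D : ℕ} (A : Matrix (Fin d) (Fin D) ℝ) (X : Matrix (Fin 2) (Fin d) ℝ) :
    Matrix (Fin 2) (Fin D) ℝ :=
  Matrix.of fun j k =>
    if j = 0 then max (dot (X 0) (col A k)) (dot (X 1) (col A k))
    else min (dot (X 0) (col A k)) (dot (X 1) (col A k))

/-- The 2×2 permutation matrix exchanging the two rows. -/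
def P : Matrix (Fin 2) (Fin 2) ℝ := Matrix.of ![![0, 1], ![1, 0]]

/-- Euclidean norm on `ℝ^n`. -/
def vnorm {n : ℕ} (x : Fin n → ℝ) : ℝ := Real.sqrt (∑ i, (x i) ^ 2)

/-- Frobenius norm on `ℝ^{2×n}`. -/
def fnorm {n : ℕ} (X : Matrix (Fin 2) (Fin n) ℝ) : ℝ := Real.sqrt (∑ i, ∑ j, (X i j) ^ 2)

/-- Operator norm of `T_A` (largest singular value of `A`): supremum of `‖T_A x‖`
over unit vectors `x`. -/
def sigma1 {d D : ℕ} (A : Matrix (Fin d) (Fin D) ℝ) : ℝ :=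
  sSup {c : ℝ | ∃ x : Fin d → ℝ, vnorm x = 1 ∧ c = vnorm (TA A x)}

/-- `λ(I) = inf { Σ_{i∈I} ⟨u, a_i⟩² : ‖u‖ = 1 }`, the square of the `d`-th singular value
of the submatrix `A[I]`. -/
def lam {d D : ℕ} (A : Matrix (Fin d) (Fin D) ℝ) (I : Finset (Fin D)) : ℝ :=
  sInf {c : ℝ | ∃ u : Fin d → ℝ, vnorm u = 1 ∧ c = ∑ i ∈ I, (dot u (col A i)) ^ 2}

/-- `A₀² = min_I (λ(I) + λ(Iᶜ))`. -/
def A0sq {d D : ℕ} (A : Matrix (Fin d) (Fin D) ℝ) : ℝ :=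
  sInf {c : ℝ | ∃ I : Finset (Fin D), c = lam A I + lam A Iᶜ}

lemma vnorm_nonneg_aux {n : ℕ} (x : Fin n → ℝ) : 0 ≤ vnorm x := Real.sqrt_nonneg _

lemma vnorm_sq_aux {n : ℕ} (x : Fin n → ℝ) : vnorm x ^ 2 = ∑ i, (x i) ^ 2 :=
  Real.sq_sqrt (Finset.sum_nonneg fun i _ => sq_nonneg _)

lemma dot_smul_aux {d : ℕ} (c : ℝ) (x a : Fin d → ℝ) : dot (c • x) a = c * dot x a := by
  simp [dot, Finset.mul_sum, mul_assoc]

lemma dot_sub_aux {d : ℕ} (x y a : Fin d → ℝ) : dot (x - y) a = dot x a - dot y a := by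
  simp [dot, sub_mul, Finset.sum_sub_distrib]

lemma dot_add_aux {d : ℕ} (x y a : Fin d → ℝ) : dot (x + y) a = dot x a + dot y a := by
  simp [dot, add_mul, Finset.sum_add_distrib]

lemma vnorm_smul_aux {n : ℕ} (c : ℝ) (x : Fin n → ℝ) : vnorm (c • x) = |c| * vnorm x := by
  unfold vnorm
  rw [← Real.sqrt_sq_eq_abs, ← Real.sqrt_mul (sq_nonneg c), Finset.mul_sum]
  congr 1
  apply Finset.sum_congr rfl
  intro i _
  simp [mul_pow]

lemma exists_unit_aux {d : ℕ} (hd : 0 < d) : ∃ u : Fin d → ℝ, vnorm u = 1 := by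
  refine ⟨fun i => if i = ⟨0, hd⟩ then 1 else 0, ?_⟩
  unfold vnorm
  have : (∑ i : Fin d, (if i = (⟨0, hd⟩ : Fin d) then (1:ℝ) else 0) ^ 2) = 1 := by
    have h1 : ∀ i : Fin d, (if i = (⟨0, hd⟩ : Fin d) then (1:ℝ) else 0) ^ 2
        = (if i = (⟨0, hd⟩ : Fin d) then (1:ℝ) else 0) := by
      intro i; split <;> norm_num
    rw [Finset.sum_congr rfl (fun i _ => h1 i)]
    simp
  rw [this, Real.sqrt_one]

lemma lam_bddBelow {d D : ℕ} (A : Matrix (Fin d) (Fin D) ℝ) (I : Finset (Fin D)) :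
    BddBelow {c : ℝ | ∃ u : Fin d → ℝ, vnorm u = 1 ∧ c = ∑ i ∈ I, (dot u (col A i)) ^ 2} := by
  refine ⟨0, ?_⟩
  rintro c ⟨u, hu, rfl⟩
  positivity

lemma lam_nonneg {d D : ℕ} (hd : 0 < d) (A : Matrix (Fin d) (Fin D) ℝ) (I : Finset (Fin D)) :
    0 ≤ lam A I := by
  apply le_csInf
  · obtain ⟨u, hu⟩ := exists_unit_aux hd
    exact ⟨_, u, hu, rfl⟩
  · rintro c ⟨u, hu, rfl⟩
    positivity

lemma lam_mul_le {d D : ℕ} (hd : 0 < d) (A : Matrix (Fin d) (Fin D) ℝ) (I : Finset (Fin D))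
    (u : Fin d → ℝ) : lam A I * vnorm u ^ 2 ≤ ∑ i ∈ I, (dot u (col A i)) ^ 2 := by
  rcases eq_or_lt_of_le (vnorm_nonneg_aux u) with h | h
  · have hs : ∑ i, (u i) ^ 2 = 0 := by
      have := vnorm_sq_aux u
      rw [← h] at this
      simpa using this.symm
    have hu0 : ∀ i, u i = 0 := by
      intro i
      have := (Finset.sum_eq_zero_iff_of_nonneg (fun i _ => sq_nonneg (u i))).mp hs i
        (Finset.mem_univ i)
      exact pow_eq_zero_iff (by norm_num) |>.mp this
    have hdot : ∀ k, dot u (col A k) = 0 := by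
      intro k; unfold dot; simp [hu0]
    rw [← h]
    simp [hdot]
  · set c := vnorm u with hc
    have hcne : c ≠ 0 := ne_of_gt h
    have hv : vnorm (c⁻¹ • u) = 1 := by
      rw [vnorm_smul_aux, abs_of_pos (inv_pos.mpr h), ← hc, inv_mul_cancel₀ hcne]
    have hle : lam A I ≤ ∑ i ∈ I, (dot (c⁻¹ • u) (col A i)) ^ 2 :=
      csInf_le (lam_bddBelow A I) ⟨_, hv, rfl⟩
    have heq : ∑ i ∈ I, (dot (c⁻¹ • u) (col A i)) ^ 2
        = c⁻¹ ^ 2 * ∑ i ∈ I, (dot u (col A i)) ^ 2 := by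
      rw [Finset.mul_sum]
      apply Finset.sum_congr rfl
      intro i _
      rw [dot_smul_aux, mul_pow]
    rw [heq] at hle
    have := mul_le_mul_of_nonneg_right hle (sq_nonneg c)
    calc lam A I * c ^ 2 ≤ c⁻¹ ^ 2 * (∑ i ∈ I, (dot u (col A i)) ^ 2) * c ^ 2 := this
      _ = ∑ i ∈ I, (dot u (col A i)) ^ 2 := by
          field_simp

lemma A0sq_le {d D : ℕ} (hd : 0 < d) (A : Matrix (Fin d) (Fin D) ℝ) (I : Finset (Fin D)) :
    A0sq A ≤ lam A I + lam A Iᶜ := by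
  apply csInf_le
  · refine ⟨0, ?_⟩
    rintro c ⟨J, rfl⟩
    have := lam_nonneg hd A J
    have := lam_nonneg hd A Jᶜ
    linarith
  · exact ⟨I, rfl⟩

lemma abs_sub_sq_eq_min (a b : ℝ) :
    (|a| - |b|) ^ 2 = min ((a - b) ^ 2) ((a + b) ^ 2) := by
  rcases le_total 0 (a * b) with h | h
  · have hab : |a| * |b| = a * b := by rw [← abs_mul, abs_of_nonneg h]
    rw [min_eq_left (by nlinarith)]
    nlinarith [sq_abs a, sq_abs b]
  · have hab : |a| * |b| = -(a * b) := by rw [← abs_mul, abs_of_nonpos h]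
    rw [min_eq_right (by nlinarith)]
    nlinarith [sq_abs a, sq_abs b]

/-- `A₀` is a lower Lipschitz bound for `α_A` w.r.t. the quotient
distance `min(‖x-y‖, ‖x+y‖)`. -/
theorem alpha_lower_lipschitz
    {d D : ℕ} (hd : 0 < d) (hD : 0 < D) (A : Matrix (Fin d) (Fin D) ℝ) :
    ∀ x y : Fin d → ℝ,
      (vnorm (alpha A x - alpha A y)) ^ 2 ≥
        A0sq A * (min (vnorm (x - y)) (vnorm (x + y))) ^ 2 := by
  classical
  intro x y
  set s : Fin D → ℝ := fun k => dot (x - y) (col A k) with hs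
  set t : Fin D → ℝ := fun k => dot (x + y) (col A k) with ht
  set m : ℝ := min (vnorm (x - y)) (vnorm (x + y)) with hm
  have hm0 : 0 ≤ m := le_min (vnorm_nonneg_aux _) (vnorm_nonneg_aux _)
  -- LHS equals sum of pointwise minima
  have hLHS : (vnorm (alpha A x - alpha A y)) ^ 2
      = ∑ k, min ((s k) ^ 2) ((t k) ^ 2) := by
    rw [vnorm_sq_aux]
    apply Finset.sum_congr rfl
    intro k _
    have : (alpha A x - alpha A y) k = |dot x (col A k)| - |dot y (col A k)| := rfl
    rw [this, abs_sub_sq_eq_min]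
    simp only [hs, ht, dot_sub_aux, dot_add_aux]
  set I : Finset (Fin D) := Finset.univ.filter (fun k => (s k) ^ 2 ≤ (t k) ^ 2) with hI
  have hsplit : ∑ k, min ((s k) ^ 2) ((t k) ^ 2)
      = (∑ k ∈ I, (s k) ^ 2) + ∑ k ∈ Iᶜ, (t k) ^ 2 := by
    rw [← Finset.sum_add_sum_compl I (fun k => min ((s k) ^ 2) ((t k) ^ 2))]
    congr 1
    · apply Finset.sum_congr rfl
      intro k hk
      exact min_eq_left ((Finset.mem_filter.mp hk).2)
    · apply Finset.sum_congr rfl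
      intro k hk
      have : ¬ ((s k) ^ 2 ≤ (t k) ^ 2) := by
        intro hle
        exact (Finset.mem_compl.mp hk) (Finset.mem_filter.mpr ⟨Finset.mem_univ k, hle⟩)
      exact min_eq_right (le_of_not_ge this)
  have h1 : lam A I * m ^ 2 ≤ ∑ k ∈ I, (s k) ^ 2 := by
    calc lam A I * m ^ 2 ≤ lam A I * vnorm (x - y) ^ 2 := by
          apply mul_le_mul_of_nonneg_left _ (lam_nonneg hd A I)
          exact pow_le_pow_left₀ hm0 (min_le_left _ _) 2
      _ ≤ ∑ k ∈ I, (s k) ^ 2 := lam_mul_le hd A I (x - y)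
  have h2 : lam A Iᶜ * m ^ 2 ≤ ∑ k ∈ Iᶜ, (t k) ^ 2 := by
    calc lam A Iᶜ * m ^ 2 ≤ lam A Iᶜ * vnorm (x + y) ^ 2 := by
          apply mul_le_mul_of_nonneg_left _ (lam_nonneg hd A Iᶜ)
          exact pow_le_pow_left₀ hm0 (min_le_right _ _) 2
      _ ≤ ∑ k ∈ Iᶜ, (t k) ^ 2 := lam_mul_le hd A Iᶜ (x + y)
  have h3 : A0sq A * m ^ 2 ≤ (lam A I + lam A Iᶜ) * m ^ 2 :=
    mul_le_mul_of_nonneg_right (A0sq_le hd A I) (sq_nonneg m)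
  rw [ge_iff_le, hLHS, hsplit]
  calc A0sq A * m ^ 2 ≤ (lam A I + lam A Iᶜ) * m ^ 2 := h3
    _ = lam A I * m ^ 2 + lam A Iᶜ * m ^ 2 := by ring
    _ ≤ (∑ k ∈ I, (s k) ^ 2) + ∑ k ∈ Iᶜ, (t k) ^ 2 := add_le_add h1 h2

end

end PR
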